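/- Let A be a bounded linear operator on a complex Hilbert space with A² = 0. Then w(A) = (1/2)‖A‖ and ‖ |A| + |A*| ‖ = ‖A‖. -/

import Mathlib

open ContinuousLinearMap

variable {H : Type*} [NormedAddCommGroup H] [InnerProductSpace ℂ H] [CompleteSpace H]

noncomputable def numRadius (A : H →L[ℂ] H) : ℝ :=
  ⨆ x : {x : H // ‖x‖ = 1}, ‖(inner ℂ (A x) (x : H) : ℂ)‖

noncomputable def absOp (A : H →L[ℂ] H) : H →L[ℂ] H := CFC.sqrt (adjoint A * A)

set_option synthInstance.maxHeartbeats 1000000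
set_option maxHeartbeats 1000000
set_option linter.unusedSectionVars false

lemma absOp_nonneg (A : H →L[ℂ] H) : 0 ≤ absOp A := CFC.sqrt_nonneg _
lemma absOp_sa (A : H →L[ℂ] H) : IsSelfAdjoint (absOp A) := .of_nonneg (absOp_nonneg A)
lemma absOp_mul_self (A : H →L[ℂ] H) : absOp A * absOp A = adjoint A * A := by
  have : (0:H→L[ℂ]H) ≤ adjoint A * A := by
    simpa [star_eq_adjoint] using star_mul_self_nonneg A
  exact CFC.sqrt_mul_sqrt_self _ this
lemma norm_absOp_apply (A : H →L[ℂ] H) (x : H) : ‖absOp A x‖ = ‖A x‖ := by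
  have h1 : (inner ℂ (absOp A x) (absOp A x) : ℂ) = inner ℂ (A x) (A x) := by
    have e1 : (inner ℂ (absOp A x) (absOp A x) : ℂ) = inner ℂ x ((absOp A * absOp A) x) := by
      nth_rewrite 1 [← (absOp_sa A).adjoint_eq]
      rw [ContinuousLinearMap.mul_apply, adjoint_inner_left]
    rw [e1, absOp_mul_self, ContinuousLinearMap.mul_apply, adjoint_inner_right]
  rw [inner_self_eq_norm_sq_to_K, inner_self_eq_norm_sq_to_K] at h1
  have h2 : ‖absOp A x‖ ^ 2 = ‖A x‖ ^ 2 := by exact_mod_cast h1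
  exact (sq_eq_sq₀ (norm_nonneg _) (norm_nonneg _)).mp h2

section nilpotent
variable (A : H →L[ℂ] H) (h : A * A = 0)
include h

lemma AA_zero (x : H) : A (A x) = 0 := by
  have := DFunLike.congr_fun h x
  simpa [mul_apply] using this

lemma mem_ker_of_range (x : H) : A x ∈ A.ker := by
  simpa [LinearMap.mem_ker] using AA_zero A h x

lemma adjoint_zero_of_orth {v : H} (hv : v ∈ (A.ker)ᗮ) : adjoint A v = 0 := by
  have h1 : (inner ℂ (adjoint A v) (adjoint A v) : ℂ) = inner ℂ v (A (adjoint A v)) :=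
    adjoint_inner_left A (adjoint A v) v
  have h2 : (inner ℂ v (A (adjoint A v)) : ℂ) = 0 :=
    (Submodule.mem_orthogonal' _ _).mp hv _ (mem_ker_of_range A h _)
  rw [h2] at h1
  exact inner_self_eq_zero.mp h1

lemma ker_adjoint_orth_le : ((adjoint A).ker)ᗮ ≤ A.ker := by
  have hk : (adjoint A).ker = (A.range)ᗮ := by
    ext x
    constructor
    · intro hx
      rw [Submodule.mem_orthogonal]
      rintro _ ⟨u, rfl⟩
      have : (inner ℂ (adjoint A x) u : ℂ) = inner ℂ x (A u) := adjoint_inner_left A u x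
      rw [show adjoint A x = 0 from LinearMap.mem_ker.mp hx] at this
      simp only [inner_zero_left] at this
      exact (by rw [← inner_conj_symm, ← this, map_zero] : inner ℂ (A u) x = 0)
    · intro hx
      rw [LinearMap.mem_ker]
      have h1 : (inner ℂ (adjoint A x) (adjoint A x) : ℂ) = inner ℂ x (A (adjoint A x)) :=
        adjoint_inner_left A (adjoint A x) x
      have h2 : (inner ℂ x (A (adjoint A x)) : ℂ) = 0 := by
        have := (Submodule.mem_orthogonal _ x).mp hx (A (adjoint A x)) ⟨_, rfl⟩
        rw [← inner_conj_symm, this, map_zero]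
      rw [h2] at h1
      exact inner_self_eq_zero.mp h1
  rw [hk, Submodule.orthogonal_orthogonal_eq_closure]
  refine Submodule.topologicalClosure_minimal _ ?_ (isClosed_ker A)
  rintro _ ⟨u, rfl⟩
  exact mem_ker_of_range A h u

lemma A_absOp_adjoint (y : H) : A (absOp (adjoint A) y) = 0 := by
  have hmem : absOp (adjoint A) y ∈ ((adjoint A).ker)ᗮ := by
    rw [Submodule.mem_orthogonal]
    intro z hz
    have hQz : absOp (adjoint A) z = 0 := by
      have := norm_absOp_apply (adjoint A) z
      rw [show adjoint A z = 0 from LinearMap.mem_ker.mp hz, norm_zero] at this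
      exact norm_eq_zero.mp this
    have e1 : (inner ℂ (absOp (adjoint A) z) y : ℂ) = inner ℂ z (absOp (adjoint A) y) := by
      nth_rewrite 1 [← (absOp_sa (adjoint A)).adjoint_eq]
      exact adjoint_inner_left _ y z
    rw [← e1, hQz, inner_zero_left]
  exact LinearMap.mem_ker.mp (ker_adjoint_orth_le A h hmem)

lemma absOp_mul_absOp (y : H) : absOp A (absOp (adjoint A) y) = 0 := by
  have := norm_absOp_apply A (absOp (adjoint A) y)
  rw [A_absOp_adjoint A h, norm_zero] at this
  exact norm_eq_zero.mp this

lemma norm_sum_sq (x : H) :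
    ‖(absOp A + absOp (adjoint A)) x‖ ^ 2 = ‖A x‖ ^ 2 + ‖adjoint A x‖ ^ 2 := by
  have horth : (inner ℂ (absOp A x) (absOp (adjoint A) x) : ℂ) = 0 := by
    nth_rewrite 1 [← (absOp_sa A).adjoint_eq]
    rw [adjoint_inner_left, absOp_mul_absOp A h, inner_zero_right]
  rw [add_apply, norm_add_sq (𝕜 := ℂ), horth, norm_absOp_apply, norm_absOp_apply]
  simp

end nilpotent

section nil2
variable (A : H →L[ℂ] H) (h : A * A = 0)

lemma decomp (x : H) : ∃ u v, u ∈ A.ker ∧ v ∈ (A.ker)ᗮ ∧ x = u + v ∧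
    ‖x‖ ^ 2 = ‖u‖ ^ 2 + ‖v‖ ^ 2 := by
  haveI : CompleteSpace (A.ker) := (isClosed_ker A).completeSpace_coe
  refine ⟨A.ker.orthogonalProjectionOnto x, x - A.ker.orthogonalProjectionOnto x,
    Submodule.coe_mem _, Submodule.sub_starProjection_mem_orthogonal (K := A.ker) x, by abel, ?_⟩
  have horth : (inner ℂ ((A.ker.orthogonalProjectionOnto x : H))
      (x - A.ker.orthogonalProjectionOnto x) : ℂ) = 0 :=
    (Submodule.mem_orthogonal _ _).mp (Submodule.sub_starProjection_mem_orthogonal (K := A.ker) x) _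
      (Submodule.coe_mem _)
  have := norm_add_sq (𝕜 := ℂ) ((A.ker.orthogonalProjectionOnto x : H))
    (x - A.ker.orthogonalProjectionOnto x)
  rw [horth] at this
  simpa using this

include h

lemma normsum_le (x : H) : ‖(absOp A + absOp (adjoint A)) x‖ ≤ ‖A‖ * ‖x‖ := by
  obtain ⟨u, v, hu, hv, rfl, hpyth⟩ := decomp A x
  have hadj : ‖adjoint A‖ = ‖A‖ := by rw [← star_eq_adjoint]; exact norm_star A
  have hAx : A (u + v) = A v := by
    rw [map_add, show A u = 0 from LinearMap.mem_ker.mp hu, zero_add]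
  have hA'x : adjoint A (u + v) = adjoint A u := by
    rw [map_add, adjoint_zero_of_orth A h hv, add_zero]
  have h1 : ‖A v‖ ≤ ‖A‖ * ‖v‖ := le_opNorm A v
  have h2 : ‖adjoint A u‖ ≤ ‖A‖ * ‖u‖ := by
    rw [← hadj]; exact le_opNorm _ u
  have hsq := norm_sum_sq A h (u + v)
  rw [hAx, hA'x] at hsq
  have key : ‖(absOp A + absOp (adjoint A)) (u + v)‖ ^ 2 ≤ (‖A‖ * ‖u + v‖) ^ 2 := by
    rw [hsq, mul_pow, hpyth]
    nlinarith [norm_nonneg (A v), norm_nonneg (adjoint A u), norm_nonneg u, norm_nonneg v,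
      opNorm_nonneg A]
  exact le_of_pow_le_pow_left₀ two_ne_zero (mul_nonneg (opNorm_nonneg A) (norm_nonneg _)) key

lemma part2 : ‖absOp A + absOp (adjoint A)‖ = ‖A‖ := by
  refine le_antisymm (opNorm_le_bound _ (norm_nonneg A) (normsum_le A h)) ?_
  refine opNorm_le_bound A (norm_nonneg _) fun x => ?_
  have h1 : ‖A x‖ ^ 2 ≤ ‖(absOp A + absOp (adjoint A)) x‖ ^ 2 := by
    rw [norm_sum_sq A h]
    nlinarith [norm_nonneg (adjoint A x)]
  have h2 : ‖A x‖ ≤ ‖(absOp A + absOp (adjoint A)) x‖ :=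
    le_of_pow_le_pow_left₀ two_ne_zero (norm_nonneg _) h1
  exact h2.trans (le_opNorm _ x)

end nil2

section nil3
variable (A : H →L[ℂ] H) (h : A * A = 0)

lemma numRadius_nonneg : 0 ≤ numRadius A := Real.iSup_nonneg fun _ => norm_nonneg _

lemma numRadius_bdd : BddAbove (Set.range fun x : {x : H // ‖x‖ = 1} =>
    ‖(inner ℂ (A x) (x : H) : ℂ)‖) := by
  refine ⟨‖A‖, ?_⟩
  rintro _ ⟨x, rfl⟩
  calc ‖(inner ℂ (A x) (x : H) : ℂ)‖ ≤ ‖A (x : H)‖ * ‖(x : H)‖ := norm_inner_le_norm _ _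
    _ ≤ (‖A‖ * ‖(x : H)‖) * ‖(x : H)‖ := by
        gcongr; exact le_opNorm A _
    _ = ‖A‖ := by rw [x.2]; ring

include h

lemma inner_le_half (x : H) (hx : ‖x‖ = 1) : ‖(inner ℂ (A x) x : ℂ)‖ ≤ 1 / 2 * ‖A‖ := by
  obtain ⟨u, v, hu, hv, rfl, hpyth⟩ := decomp A x
  have hAx : A (u + v) = A v := by rw [map_add, show A u = 0 from LinearMap.mem_ker.mp hu, zero_add]
  have hAvv : (inner ℂ (A v) v : ℂ) = 0 :=
    (Submodule.mem_orthogonal _ _).mp hv _ (mem_ker_of_range A h v)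
  have hinner : (inner ℂ (A (u + v)) (u + v) : ℂ) = inner ℂ (A v) u := by
    rw [hAx, inner_add_right, hAvv, add_zero]
  rw [hinner]
  have h1 : ‖(inner ℂ (A v) u : ℂ)‖ ≤ ‖A‖ * ‖v‖ * ‖u‖ := by
    calc ‖(inner ℂ (A v) u : ℂ)‖ ≤ ‖A v‖ * ‖u‖ := norm_inner_le_norm _ _
      _ ≤ ‖A‖ * ‖v‖ * ‖u‖ := by gcongr; exact le_opNorm A v
  rw [hx] at hpyth
  nlinarith [opNorm_nonneg A, norm_nonneg u, norm_nonneg v, sq_nonneg (‖u‖ - ‖v‖)]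

lemma norm_le_two_numRadius (y : H) : ‖A y‖ ≤ 2 * numRadius A * ‖y‖ := by
  obtain ⟨u, v, hu, hv, rfl, hpyth⟩ := decomp A y
  have hAy : A (u + v) = A v := by rw [map_add, show A u = 0 from LinearMap.mem_ker.mp hu, zero_add]
  rw [hAy]
  have hnr := numRadius_nonneg A
  by_cases hw : A v = 0
  · rw [hw, norm_zero]
    positivity
  · have hv0 : v ≠ 0 := by rintro rfl; simp at hw
    have hnv : (0:ℝ) < ‖v‖ := norm_pos_iff.mpr hv0
    have hnw : (0:ℝ) < ‖A v‖ := norm_pos_iff.mpr hw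
    set w := A v with hwdef
    set a : ℝ := ‖v‖⁻¹ with ha
    set b : ℝ := ‖w‖⁻¹ with hb
    set c : ℝ := (Real.sqrt 2)⁻¹ with hc
    set e : H := (a : ℂ) • v with he
    set f : H := (b : ℂ) • w with hf
    have hne : ‖e‖ = 1 := by
      rw [he, norm_smul, Complex.norm_real, Real.norm_of_nonneg (by positivity), ha,
        inv_mul_cancel₀ hnv.ne']
    have hnf : ‖f‖ = 1 := by
      rw [hf, norm_smul, Complex.norm_real, Real.norm_of_nonneg (by positivity), hb,
        inv_mul_cancel₀ hnw.ne']
    have hwker : w ∈ A.ker := mem_ker_of_range A h v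
    have hwv : (inner ℂ w v : ℂ) = 0 := (Submodule.mem_orthogonal _ _).mp hv w hwker
    have hvw : (inner ℂ v w : ℂ) = 0 := (Submodule.mem_orthogonal' _ _).mp hv w hwker
    have hef : (inner ℂ e f : ℂ) = 0 := by
      rw [he, hf, inner_smul_left, inner_smul_right, hvw]; ring
    have hnef : ‖e + f‖ = Real.sqrt 2 := by
      have h2 : ‖e + f‖ ^ 2 = 2 := by
        rw [norm_add_sq (𝕜 := ℂ), hef, hne, hnf]; norm_num
      rw [← Real.sqrt_sq (norm_nonneg _), h2]
    set x : H := (c : ℂ) • (e + f) with hxdef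
    have hx : ‖x‖ = 1 := by
      rw [hxdef, norm_smul, Complex.norm_real, Real.norm_of_nonneg (by positivity), hnef, hc,
        inv_mul_cancel₀ (by positivity)]
    have hAe : A e = (a : ℂ) • w := by rw [he, map_smul, hwdef]
    have hAf : A f = 0 := by rw [hf, map_smul, hwdef, AA_zero A h, smul_zero]
    have hAx : A x = ((c : ℂ) * a) • w := by
      rw [hxdef, map_smul, map_add, hAe, hAf, add_zero, smul_smul]
    have hinner : (inner ℂ (A x) x : ℂ) = ((c ^ 2 * a * b * ‖w‖ ^ 2 : ℝ) : ℂ) := by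
      rw [hAx, hxdef, inner_smul_left, inner_smul_right, inner_add_right, he, hf,
        inner_smul_right, inner_smul_right, hwv,
        show (inner ℂ w w : ℂ) = ((‖w‖ ^ 2 : ℝ) : ℂ) from by
          rw [inner_self_eq_norm_sq_to_K]; norm_num]
      simp only [map_mul, Complex.conj_ofReal]
      norm_cast
      ring
    have hvalue : ‖(inner ℂ (A x) x : ℂ)‖ = 2⁻¹ * (‖w‖ * ‖v‖⁻¹) := by
      rw [hinner, Complex.norm_real, Real.norm_of_nonneg (by positivity)]
      have hc2 : c ^ 2 = 2⁻¹ := by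
        rw [hc, inv_pow, Real.sq_sqrt (by norm_num : (2:ℝ) ≥ 0)]
      rw [hc2, ha, hb]
      field_simp
    have hle : 2⁻¹ * (‖w‖ * ‖v‖⁻¹) ≤ numRadius A := by
      have := le_ciSup (numRadius_bdd A) (⟨x, hx⟩ : {x : H // ‖x‖ = 1})
      rw [← hvalue]
      exact this
    have hvy : ‖v‖ ≤ ‖u + v‖ := by
      nlinarith [norm_nonneg u, norm_nonneg v, norm_nonneg (u + v)]
    calc ‖w‖ = 2 * (2⁻¹ * (‖w‖ * ‖v‖⁻¹)) * ‖v‖ := by field_simp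
      _ ≤ 2 * numRadius A * ‖v‖ := by gcongr
      _ ≤ 2 * numRadius A * ‖u + v‖ := by gcongr

end nil3

theorem stmt18 (A : H →L[ℂ] H) (h : A * A = 0) :
    numRadius A = (1 / 2) * ‖A‖ ∧ ‖absOp A + absOp (adjoint A)‖ = ‖A‖ := by
  refine ⟨?_, part2 A h⟩
  have hub : numRadius A ≤ 1 / 2 * ‖A‖ :=
    Real.iSup_le (fun x => inner_le_half A h x x.2) (by positivity)
  have hlb : ‖A‖ ≤ 2 * numRadius A := by
    have h2 : (0:ℝ) ≤ 2 * numRadius A := by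
      have := numRadius_nonneg A; positivity
    exact opNorm_le_bound A h2 (norm_le_two_numRadius A h)
  linarith
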